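/- Fix real constants Ω > 0, μ₀ ≥ 0 and M > 1. For each integer i ≥ 1 and u, v ∈ ℝ⁴ define the sliced propagator C^i(u,v) = ∫_{M^{-2i}}^{M^{-2(i-1)}} (Ω / (2π·sinh α)²) · exp( −(Ω/4)·coth(α/2)·‖u‖² − (Ω/4)·tanh(α/2)·‖v‖² − (μ₀²/Ω)·α ) dα. Then there exist constants K > 0 and c > 0, depending only on Ω, μ₀ and M, such that for all i ≥ 1 and all u, v ∈ ℝ⁴ one has C^i(u,v) ≤ K·M^{2i}·exp( −c·( M^{i}·‖u‖ + M^{-i}·‖v‖ ) ). -/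

import Mathlib

/-!
On the slice `α ∈ [ε², M²ε²]`, `ε = M⁻ⁱ`, we have `α ≤ 1`, and the integrand is bounded pointwise:
`sinh α ≥ α` bounds the prefactor by `Ω / (4π²ε⁴)`, while `coth (α/2) ≥ 1/α` and
`tanh (α/2) ≥ α / (2 cosh 1)` give Gaussian decay in `‖u‖/ε` and `ε‖v‖` at a rate `c ≍ Ω/M²`
(the mass term only helps), which `-x² ≤ 1/4 - x` turns into exponential decay. The slice has
length at most `M²ε²`, so integrating leaves the factor `ε⁻² = M^{2i}`.
-/

open MeasureTheory Real

/-- The slice `i` of the Grosse–Wulkenhaar propagator in short/long variables. -/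
noncomputable def slicedPropagator (Ω μ₀ M : ℝ) (i : ℕ)
    (u v : EuclideanSpace ℝ (Fin 4)) : ℝ :=
  ∫ α in Set.Icc (M ^ (-2 * (i : ℝ))) (M ^ (-2 * ((i : ℝ) - 1))),
    (Ω / (2 * π * Real.sinh α) ^ 2) *
      Real.exp (-(Ω / 4) * (Real.cosh (α / 2) / Real.sinh (α / 2)) * ‖u‖ ^ 2
        - (Ω / 4) * Real.tanh (α / 2) * ‖v‖ ^ 2 - (μ₀ ^ 2 / Ω) * α)

open Set

lemma sinh_le_two_mul_mul_cosh {x : ℝ} (hx : 0 ≤ x) : sinh x ≤ 2 * x * cosh x := by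
  have h₁ := add_one_le_exp (-(2 * x))
  have h₂ : exp (-x) = exp x * exp (-(2 * x)) := by rw [← exp_add]; ring_nf
  rw [sinh_eq, cosh_eq]
  nlinarith [exp_pos x, exp_pos (-x)]

lemma inv_two_mul_le_cosh_div_sinh {x : ℝ} (hx : 0 < x) : (2 * x)⁻¹ ≤ cosh x / sinh x := by
  rw [inv_eq_one_div, div_le_div_iff₀ (by positivity) (sinh_pos_iff.mpr hx)]
  linarith [sinh_le_two_mul_mul_cosh hx.le]

lemma div_cosh_one_le_tanh {x : ℝ} (h₀ : 0 ≤ x) (h₁ : x ≤ 1) : x / cosh 1 ≤ tanh x := by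
  rw [tanh_eq_sinh_div_cosh]
  refine div_le_div₀ (h₀.trans (self_le_sinh_iff.mpr h₀)) (self_le_sinh_iff.mpr h₀)
    (cosh_pos x) ?_
  rw [cosh_le_cosh, abs_of_nonneg h₀, abs_one]
  exact h₁

lemma setIntegral_Icc_le_mul_of_le {f : ℝ → ℝ} {a b C : ℝ} (hab : a ≤ b)
    (hf₀ : ∀ x ∈ Icc a b, 0 ≤ f x) (hfC : ∀ x ∈ Icc a b, f x ≤ C) :
    ∫ x in Icc a b, f x ≤ C * (b - a) := by
  rw [← volume_real_Icc_of_le hab]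
  refine (le_norm_self _).trans (norm_setIntegral_le_of_norm_le_const measure_Icc_lt_top ?_)
  intro x hx
  rw [norm_of_nonneg (hf₀ x hx)]
  exact hfC x hx

noncomputable def mehlerIntegrand (Ω μ₀ r ρ α : ℝ) : ℝ :=
  (Ω / (2 * π * sinh α) ^ 2) *
    exp (-(Ω / 4) * (cosh (α / 2) / sinh (α / 2)) * r ^ 2
      - (Ω / 4) * tanh (α / 2) * ρ ^ 2 - (μ₀ ^ 2 / Ω) * α)

lemma slicedPropagator_eq (Ω μ₀ M : ℝ) (i : ℕ) (u v : EuclideanSpace ℝ (Fin 4)) :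
    slicedPropagator Ω μ₀ M i u v =
      ∫ α in Icc (M ^ (-2 * (i : ℝ))) (M ^ (-2 * ((i : ℝ) - 1))),
        mehlerIntegrand Ω μ₀ ‖u‖ ‖v‖ α :=
  rfl

variable {Ω μ₀ r ρ α : ℝ}

lemma mehlerIntegrand_nonneg (hΩ : 0 ≤ Ω) : 0 ≤ mehlerIntegrand Ω μ₀ r ρ α := by
  unfold mehlerIntegrand
  positivity

lemma mehlerIntegrand_le (hΩ : 0 ≤ Ω) (hα₀ : 0 < α) (hα₂ : α ≤ 2) :
    mehlerIntegrand Ω μ₀ r ρ α ≤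
      Ω / (4 * π ^ 2 * α ^ 2) * exp (-(Ω / (4 * α)) * r ^ 2 - Ω * α / (8 * cosh 1) * ρ ^ 2) := by
  have hprefactor : Ω / (2 * π * sinh α) ^ 2 ≤ Ω / (4 * π ^ 2 * α ^ 2) := by
    have := self_le_sinh_iff.mpr hα₀.le
    calc Ω / (2 * π * sinh α) ^ 2 ≤ Ω / (2 * π * α) ^ 2 := by gcongr
      _ = Ω / (4 * π ^ 2 * α ^ 2) := by ring
  have hcoth : Ω / (4 * α) ≤ Ω / 4 * (cosh (α / 2) / sinh (α / 2)) := by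
    have := inv_two_mul_le_cosh_div_sinh (half_pos hα₀)
    rw [mul_div_cancel₀ α two_ne_zero] at this
    rw [div_mul_eq_div_div, div_eq_mul_inv (Ω / 4)]
    gcongr
  have htanh : Ω * α / (8 * cosh 1) ≤ Ω / 4 * tanh (α / 2) := by
    have := div_cosh_one_le_tanh (half_pos hα₀).le (by linarith)
    calc Ω * α / (8 * cosh 1) = (Ω / 4) * (α / 2 / cosh 1) := by ring
      _ ≤ _ := by gcongr
  unfold mehlerIntegrand
  gcongr ?_ * exp ?_
  have hmass : 0 ≤ μ₀ ^ 2 / Ω * α := by positivity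
  nlinarith [sq_nonneg r, sq_nonneg ρ]

lemma mehlerIntegrand_le_of_mem_Icc {M ε c : ℝ} (hΩ : 0 ≤ Ω) (hε : 0 < ε)
    (hslice : M ^ 2 * ε ^ 2 ≤ 2) (hc₀ : 0 ≤ c) (hcu : c * (4 * M ^ 2) ≤ Ω)
    (hcv : c * (8 * cosh 1) ≤ Ω) (hα : α ∈ Icc (ε ^ 2) (M ^ 2 * ε ^ 2)) :
    mehlerIntegrand Ω μ₀ r ρ α ≤
      Ω / (4 * π ^ 2 * ε ^ 4) * exp (c / 2) * exp (-c * (ε⁻¹ * r + ε * ρ)) := by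
  obtain ⟨hεα, hαM⟩ := hα
  have hα₀ : 0 < α := (pow_pos hε 2).trans_le hεα
  have hprefactor : Ω / (4 * π ^ 2 * α ^ 2) ≤ Ω / (4 * π ^ 2 * ε ^ 4) := by
    calc Ω / (4 * π ^ 2 * α ^ 2) ≤ Ω / (4 * π ^ 2 * (ε ^ 2) ^ 2) := by gcongr
      _ = Ω / (4 * π ^ 2 * ε ^ 4) := by ring
  have hu : c * (ε⁻¹ * r) ^ 2 ≤ Ω / (4 * α) * r ^ 2 := by
    have : c / ε ^ 2 ≤ Ω / (4 * α) := by
      rw [div_le_div_iff₀ (by positivity) (by positivity)]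
      nlinarith
    calc c * (ε⁻¹ * r) ^ 2 = c / ε ^ 2 * r ^ 2 := by field_simp
      _ ≤ Ω / (4 * α) * r ^ 2 := by gcongr
  have hv : c * (ε * ρ) ^ 2 ≤ Ω * α / (8 * cosh 1) * ρ ^ 2 := by
    have : c * ε ^ 2 ≤ Ω * α / (8 * cosh 1) := by
      rw [le_div_iff₀ (by positivity)]
      nlinarith
    calc c * (ε * ρ) ^ 2 = c * ε ^ 2 * ρ ^ 2 := by ring
      _ ≤ Ω * α / (8 * cosh 1) * ρ ^ 2 := by gcongr
  have hexponent : -(Ω / (4 * α)) * r ^ 2 - Ω * α / (8 * cosh 1) * ρ ^ 2 ≤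
      c / 2 + -c * (ε⁻¹ * r + ε * ρ) := by
    nlinarith [mul_nonneg hc₀ (sq_nonneg (ε⁻¹ * r - 1 / 2)),
      mul_nonneg hc₀ (sq_nonneg (ε * ρ - 1 / 2))]
  calc mehlerIntegrand Ω μ₀ r ρ α
      ≤ Ω / (4 * π ^ 2 * α ^ 2) *
          exp (-(Ω / (4 * α)) * r ^ 2 - Ω * α / (8 * cosh 1) * ρ ^ 2) :=
        mehlerIntegrand_le hΩ hα₀ (hαM.trans hslice)
    _ ≤ Ω / (4 * π ^ 2 * ε ^ 4) * exp (c / 2 + -c * (ε⁻¹ * r + ε * ρ)) := by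
        gcongr
    _ = _ := by rw [exp_add]; ring

theorem sliced_propagator_bound_general (Ω μ₀ M : ℝ) (hΩ : 0 < Ω) (hM : 1 < M) :
    ∃ K c : ℝ, 0 < K ∧ 0 < c ∧
      ∀ i : ℕ, 1 ≤ i → ∀ u v : EuclideanSpace ℝ (Fin 4),
        slicedPropagator Ω μ₀ M i u v ≤
          K * M ^ (2 * (i : ℝ)) *
            Real.exp (-c * (M ^ (i : ℝ) * ‖u‖ + M ^ (-(i : ℝ)) * ‖v‖)) := by
  have hM₀ : 0 < M := one_pos.trans hM
  set c := min (Ω / (4 * M ^ 2)) (Ω / (8 * cosh 1))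
  have hc : 0 < c := lt_min (by positivity) (by positivity)
  have hcu : c * (4 * M ^ 2) ≤ Ω := (le_div_iff₀ (by positivity)).mp (min_le_left _ _)
  have hcv : c * (8 * cosh 1) ≤ Ω := (le_div_iff₀ (by positivity)).mp (min_le_right _ _)
  refine ⟨Ω * M ^ 2 / (4 * π ^ 2) * exp (c / 2), c, by positivity, hc, fun i hi u v => ?_⟩
  set ε := M ^ (-(i : ℝ))
  have hε : 0 < ε := rpow_pos_of_pos hM₀ _
  have hMi : M ^ (i : ℝ) = ε⁻¹ := by rw [← inv_inv (M ^ (i : ℝ)), ← rpow_neg hM₀.le]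
  have hM2i : M ^ (2 * (i : ℝ)) = ε⁻¹ ^ 2 := by rw [mul_comm, rpow_mul hM₀.le, hMi, rpow_two]
  have hlower : M ^ (-2 * (i : ℝ)) = ε ^ 2 := by
    rw [show -2 * (i : ℝ) = -i * 2 by ring, rpow_mul hM₀.le, rpow_two]
  have hupper : M ^ (-2 * ((i : ℝ) - 1)) = M ^ 2 * ε ^ 2 := by
    rw [show -2 * ((i : ℝ) - 1) = 2 + -2 * i by ring, rpow_add hM₀, hlower, rpow_two]
  have hslice : M ^ 2 * ε ^ 2 ≤ 1 := by
    have hi' : (1 : ℝ) ≤ i := Nat.one_le_cast.mpr hi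
    rw [← hupper]
    exact rpow_le_one_of_one_le_of_nonpos hM.le (by linarith)
  have hwidth : ε ^ 2 ≤ M ^ 2 * ε ^ 2 := le_mul_of_one_le_left (sq_nonneg ε) (one_le_pow₀ hM.le)
  rw [slicedPropagator_eq, hlower, hupper, hMi, hM2i]
  calc _ ≤ Ω / (4 * π ^ 2 * ε ^ 4) * exp (c / 2) * exp (-c * (ε⁻¹ * ‖u‖ + ε * ‖v‖)) *
          (M ^ 2 * ε ^ 2 - ε ^ 2) :=
        setIntegral_Icc_le_mul_of_le hwidth (fun _ _ => mehlerIntegrand_nonneg hΩ.le)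
          (fun _ hα => mehlerIntegrand_le_of_mem_Icc hΩ.le hε (by linarith) hc.le hcu hcv hα)
    _ ≤ Ω / (4 * π ^ 2 * ε ^ 4) * exp (c / 2) * exp (-c * (ε⁻¹ * ‖u‖ + ε * ‖v‖)) *
          (M ^ 2 * ε ^ 2) := by gcongr; linarith [sq_nonneg ε]
    _ = _ := by field_simp

/-- Scaled bound on the sliced Grosse–Wulkenhaar propagator:
`Cⁱ(u,v) ≤ K M^{2i} exp(-c (Mⁱ‖u‖ + M⁻ⁱ‖v‖))`. -/
theorem sliced_propagator_bound (Ω μ₀ M : ℝ) (hΩ : 0 < Ω) (hμ₀ : 0 ≤ μ₀) (hM : 1 < M) :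
    ∃ K c : ℝ, 0 < K ∧ 0 < c ∧
      ∀ i : ℕ, 1 ≤ i → ∀ u v : EuclideanSpace ℝ (Fin 4),
        slicedPropagator Ω μ₀ M i u v ≤
          K * M ^ (2 * (i : ℝ)) *
            Real.exp (-c * (M ^ (i : ℝ) * ‖u‖ + M ^ (-(i : ℝ)) * ‖v‖)) :=
  sliced_propagator_bound_general Ω μ₀ M hΩ hM
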